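/- Archimedean bound for the triple product factors with one Eisenstein parameter: let Γ_ℂ(s) = 2(2π)^{-s}Γ(s). There is an absolute constant C such that for all real t_j, t_f, t_g ≥ 1 and all real t, setting N₁ = ∏_{ε₁,ε₂,ε₃ ∈ {±1}} |Γ_ℂ((1 + i(ε₁ t + ε₂ t_g + ε₃ t_j))/2)|, D₁ = |Γ(1+it)|² |Γ_ℂ(1+it_g)|² |Γ_ℂ(1+it_j)|², N₂ = |Γ_ℂ((1+it_j)/2)|² |Γ_ℂ((1−it_j)/2)|² ∏_{ε₁,ε₂ ∈ {±1}} |Γ_ℂ((1 + ε₁ it_j)/2 + ε₂ it_f)|, and D₂ = |Γ_ℂ(1+it_f)|⁴ |Γ_ℂ(1+it_j)|², one has (N₁/D₁)^{1/2} (N₂/D₂)^{1/2} ≤ C e^{-(π/2) Q₁(t_j; t_f, t_g, |t|)} / (t_j t_f (1+|t|)^{1/2} t_g^{1/2}). -/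

import Mathlib

open Real Complex Finset

/-- The completed complex Gamma factor `Γ_ℂ(s) = 2 (2π)^{-s} Γ(s)`. -/
noncomputable def GammaC (s : ℂ) : ℂ := 2 * (2 * (Real.pi : ℂ)) ^ (-s) * Complex.Gamma s

/-- The exponent function `Q₁` governing the exponential decay of the archimedean
factors in the triple product bounds. -/
noncomputable def Q1 (tj tf tg tk : ℝ) : ℝ :=
  |tj / 2 + tf| + |tj / 2 - tf| + |tj + tg + tk| / 2 + |tj + tg - tk| / 2 +
    |tj - tg + tk| / 2 + |tj - tg - tk| / 2 - tj - 2 * tf - tk - tg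

/-- The set of signs `{±1}`. -/
def signs : Finset ℤ := {-1, 1}

/-!
By the reflection formula, `|Γ(1/2 + iy)|² = π / cosh (πy)` and `|Γ(1 + it)|² = πt / sinh (πt)`.
Hence every `Γ_ℂ` factor of the numerators, which lie on the line `Re s = 1/2`, is at most
`2 e^{-π|Im s|/2}`, while the factors of the denominators, on `Re s = 1`, are at least
`|Im s| e^{-π|Im s|}` up to constants (`(1 + |t|) e^{-π|t|}` for `Γ(1 + it)`). Pairing each sign
pattern with its negative, the total exponent of the numerators is
`-π Q₁(t_j; t_f, t_g, |t|)` plus that of the denominators, and the linear factors leave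
`t_j² t_f² (1 + |t|) t_g`.
-/

open ComplexConjugate

theorem ofReal_norm_Gamma_sq (z : ℂ) : ((‖Gamma z‖ ^ 2 : ℝ) : ℂ) = Gamma z * Gamma (conj z) := by
  rw [Complex.Gamma_conj, mul_conj, Complex.sq_norm]

theorem norm_Gamma_one_half_add_mul_I_sq (y : ℝ) :
    ‖Gamma (1 / 2 + y * I)‖ ^ 2 = π / Real.cosh (π * y) := by
  have hconj : conj (1 / 2 + y * I) = 1 - (1 / 2 + y * I) := by
    apply Complex.ext <;> norm_num
  have hsin : sin (π * (1 / 2 + y * I)) = Real.cosh (π * y) := by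
    rw [show (π : ℂ) * (1 / 2 + y * I) = π / 2 + (π * y : ℝ) * I by push_cast; ring,
      Complex.sin_add, Complex.sin_pi_div_two, Complex.cos_pi_div_two, Complex.cos_mul_I, Complex.ofReal_cosh]
    ring
  have key := ofReal_norm_Gamma_sq (1 / 2 + y * I)
  rw [hconj, Complex.Gamma_mul_Gamma_one_sub, hsin] at key
  exact_mod_cast key

theorem norm_Gamma_one_add_mul_I_sq {t : ℝ} (ht : t ≠ 0) :
    ‖Gamma (1 + t * I)‖ ^ 2 = π * t / Real.sinh (π * t) := by
  have htI : -(t * I) ≠ 0 := by simpa using ht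
  have hconj : conj (1 + t * I) = -(t * I) + 1 := by
    apply Complex.ext <;> simp
  have hsin : sin (π * (1 + t * I)) = -(Real.sinh (π * t) * I) := by
    rw [show (π : ℂ) * (1 + t * I) = π + (π * t : ℝ) * I by push_cast; ring, Complex.sin_add,
      Complex.sin_pi, Complex.cos_pi, Complex.sin_mul_I, Complex.ofReal_sinh]
    ring
  have hsinh : (Real.sinh (π * t) : ℂ) ≠ 0 := by
    exact_mod_cast Real.sinh_ne_zero.mpr (mul_ne_zero Real.pi_ne_zero ht)
  have key : ((‖Gamma (1 + t * I)‖ ^ 2 : ℝ) : ℂ) = -(t * I) * (π / -(Real.sinh (π * t) * I)) := by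
    rw [ofReal_norm_Gamma_sq, hconj, Complex.Gamma_add_one _ htI, ← hsin,
      ← Complex.Gamma_mul_Gamma_one_sub, show 1 - (1 + t * I) = -(t * I) by ring]
    ring
  apply Complex.ofReal_injective
  rw [key]
  push_cast
  field_simp

theorem norm_GammaC (s : ℂ) : ‖GammaC s‖ = 2 * (2 * π) ^ (-s.re) * ‖Gamma s‖ := by
  rw [GammaC, norm_mul, norm_mul, Complex.norm_two, show (2 * (π : ℂ)) = ((2 * π : ℝ) : ℂ) by
    push_cast; ring, norm_cpow_eq_rpow_re_of_pos two_pi_pos, neg_re]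

theorem norm_GammaC_one_half_add_mul_I_sq (y : ℝ) :
    ‖GammaC (1 / 2 + y * I)‖ ^ 2 = 2 / Real.cosh (π * y) := by
  have h : ((2 * π) ^ (-(1 / 2 : ℝ))) ^ 2 = (2 * π)⁻¹ := by
    rw [← Real.rpow_natCast, ← Real.rpow_mul two_pi_pos.le]; norm_num [Real.rpow_neg_one]
  rw [norm_GammaC, mul_pow, mul_pow, norm_Gamma_one_half_add_mul_I_sq]
  norm_num [h]
  field_simp
  norm_num

theorem norm_GammaC_one_add_mul_I_sq {x : ℝ} (hx : x ≠ 0) :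
    ‖GammaC (1 + x * I)‖ ^ 2 = x / (π * Real.sinh (π * x)) := by
  rw [norm_GammaC, mul_pow, mul_pow, norm_Gamma_one_add_mul_I_sq hx]
  norm_num [Real.rpow_neg_one]
  field_simp
  norm_num

theorem Real.exp_abs_le_two_mul_cosh (x : ℝ) : Real.exp |x| ≤ 2 * Real.cosh x := by
  rw [← Real.cosh_abs, Real.cosh_eq]
  linarith [Real.exp_pos (-|x|)]

theorem Real.two_mul_sinh_le_exp {x : ℝ} : 2 * Real.sinh x ≤ Real.exp x := by
  rw [Real.sinh_eq]
  linarith [Real.exp_pos (-x)]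

theorem Real.one_add_mul_sinh_le {x : ℝ} (hx : 0 ≤ x) :
    (1 + x) * Real.sinh x ≤ 2 * x * Real.exp x := by
  have hprod : Real.exp x * Real.exp (-x) = 1 := by rw [← Real.exp_add]; simp
  have hsq : 1 - 2 * x ≤ Real.exp (-x) ^ 2 := by
    rw [sq, ← Real.exp_add]; linarith [Real.add_one_le_exp (-x + -x)]
  rw [Real.sinh_eq]
  nlinarith [Real.exp_pos x, Real.exp_pos (-x)]

theorem norm_GammaC_one_half_add_mul_I_le (y : ℝ) :
    ‖GammaC (1 / 2 + y * I)‖ ≤ 2 * Real.exp (-(π / 2) * |y|) := by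
  have hcosh := Real.exp_abs_le_two_mul_cosh (π * y)
  rw [abs_mul, abs_of_pos pi_pos] at hcosh
  refine (pow_le_pow_iff_left₀ (norm_nonneg _) (by positivity) two_ne_zero).mp ?_
  rw [norm_GammaC_one_half_add_mul_I_sq, mul_pow, ← Real.exp_nat_mul,
    div_le_iff₀ (Real.cosh_pos _)]
  have hprod : Real.exp (2 * (-(π / 2) * |y|)) * Real.exp (π * |y|) = 1 := by
    rw [← Real.exp_add]; ring_nf; exact Real.exp_zero
  nlinarith [Real.exp_pos (2 * (-(π / 2) * |y|))]

theorem mul_exp_le_norm_GammaC_one_add_mul_I_sq {x : ℝ} (hx : 0 < x) :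
    2 / π * x * Real.exp (-π * x) ≤ ‖GammaC (1 + x * I)‖ ^ 2 := by
  rw [norm_GammaC_one_add_mul_I_sq hx.ne', neg_mul, Real.exp_neg,
    le_div_iff₀ (mul_pos pi_pos (Real.sinh_pos_iff.mpr (by positivity)))]
  have hsinh := Real.two_mul_sinh_le_exp (x := π * x)
  have hexp := Real.exp_pos (π * x)
  field_simp
  nlinarith [pi_pos]

theorem mul_exp_le_norm_Gamma_one_add_mul_I_sq (t : ℝ) :
    (1 + |t|) / 2 * Real.exp (-π * |t|) ≤ ‖Gamma (1 + t * I)‖ ^ 2 := by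
  rcases eq_or_ne t 0 with rfl | ht
  · norm_num
  have heven : π * t / Real.sinh (π * t) = π * |t| / Real.sinh (π * |t|) := by
    rcases abs_cases t with ⟨h, _⟩ | ⟨h, _⟩ <;> simp [h, Real.sinh_neg, neg_div_neg_eq]
  have hpos : 0 < π * |t| := by positivity
  have hmono : 1 + |t| ≤ 1 + π * |t| := by nlinarith [pi_gt_three, abs_nonneg t]
  rw [norm_Gamma_one_add_mul_I_sq ht, heven, le_div_iff₀ (Real.sinh_pos_iff.mpr hpos), neg_mul]
  generalize π * |t| = x at *
  have hsinh : (1 + |t|) * Real.sinh x ≤ 2 * x * Real.exp x :=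
    (mul_le_mul_of_nonneg_right hmono (Real.sinh_pos_iff.mpr hpos).le).trans
      (Real.one_add_mul_sinh_le hpos.le)
  have hprod : Real.exp x * Real.exp (-x) = 1 := by rw [← Real.exp_add]; simp
  nlinarith [mul_le_mul_of_nonneg_right hsinh (Real.exp_pos (-x)).le]

theorem Q1_eq_sum_signs (tj tf tg t : ℝ) :
    Q1 tj tf tg |t| =
      (∑ e1 ∈ signs, ∑ e2 ∈ signs, ∑ e3 ∈ signs, |((e1 : ℝ) * t + e2 * tg + e3 * tj) / 2| +
        ∑ e1 ∈ signs, ∑ e2 ∈ signs, |(e1 : ℝ) * tj / 2 + e2 * tf|) / 2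
        - tj - 2 * tf - |t| - tg := by
  -- Writing `|x|` as `√(x ^ 2)` lets `ring_nf` identify `|-x|` with `|x|`.
  simp only [Q1, signs, Finset.sum_pair (show (-1 : ℤ) ≠ 1 by decide)]
  rcases abs_cases t with ⟨h, _⟩ | ⟨h, _⟩ <;> rw [h] <;>
    simp only [abs_div, abs_two, ← Real.sqrt_sq_eq_abs] <;> ring_nf

theorem card_signs : #signs = 2 := rfl

namespace TripleProduct

/- `N₁ / D₁` and `N₂ / D₂` are the archimedean factors of `|⟨E_t g, u_j⟩|²` and `|⟨u_j, f²⟩|²`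
in the paper. -/

noncomputable def N₁ (t tg tj : ℝ) : ℝ :=
  ∏ e1 ∈ signs, ∏ e2 ∈ signs, ∏ e3 ∈ signs,
    ‖GammaC ((1 + Complex.I * ((e1 * t + e2 * tg + e3 * tj : ℝ) : ℂ)) / 2)‖

noncomputable def D₁ (t tg tj : ℝ) : ℝ :=
  ‖Complex.Gamma (1 + (t : ℂ) * Complex.I)‖ ^ 2 * ‖GammaC (1 + (tg : ℂ) * Complex.I)‖ ^ 2 *
    ‖GammaC (1 + (tj : ℂ) * Complex.I)‖ ^ 2

noncomputable def N₂ (tj tf : ℝ) : ℝ :=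
  ‖GammaC ((1 + (tj : ℂ) * Complex.I) / 2)‖ ^ 2 * ‖GammaC ((1 - (tj : ℂ) * Complex.I) / 2)‖ ^ 2 *
    ∏ e1 ∈ signs, ∏ e2 ∈ signs,
      ‖GammaC ((1 + ((e1 : ℝ) : ℂ) * (tj : ℂ) * Complex.I) / 2 +
        ((e2 : ℝ) : ℂ) * (tf : ℂ) * Complex.I)‖

noncomputable def D₂ (tj tf : ℝ) : ℝ :=
  ‖GammaC (1 + (tf : ℂ) * Complex.I)‖ ^ 4 * ‖GammaC (1 + (tj : ℂ) * Complex.I)‖ ^ 2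

theorem N₁_le (t tg tj : ℝ) :
    N₁ t tg tj ≤ 2 ^ 8 * Real.exp (-(π / 2) * ∑ e1 ∈ signs, ∑ e2 ∈ signs, ∑ e3 ∈ signs,
        |((e1 : ℝ) * t + e2 * tg + e3 * tj) / 2|) := by
  have hfactor (y : ℝ) : ‖GammaC ((1 + I * y) / 2)‖ ≤ 2 * Real.exp (-(π / 2) * |y / 2|) := by
    convert norm_GammaC_one_half_add_mul_I_le (y / 2) using 3
    push_cast; ring
  calc N₁ t tg tj ≤ ∏ e1 ∈ signs, ∏ e2 ∈ signs, ∏ e3 ∈ signs,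
        2 * Real.exp (-(π / 2) * |((e1 : ℝ) * t + e2 * tg + e3 * tj) / 2|) := by
        unfold N₁
        gcongr with e1 _ e2 _ e3 _
        exact hfactor _
    _ = _ := by
        simp only [prod_mul_distrib, prod_const, ← Real.exp_sum, ← mul_sum, card_signs]
        norm_num

theorem N₂_le {tj : ℝ} (htj : 0 ≤ tj) (tf : ℝ) :
    N₂ tj tf ≤ 2 ^ 8 * Real.exp (-(π / 2) * (2 * tj + ∑ e1 ∈ signs, ∑ e2 ∈ signs,
        |(e1 : ℝ) * tj / 2 + e2 * tf|)) := by
  have hplus : ‖GammaC ((1 + (tj : ℂ) * I) / 2)‖ ≤ 2 * Real.exp (-(π / 2) * (tj / 2)) := by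
    have := norm_GammaC_one_half_add_mul_I_le (tj / 2)
    rwa [abs_of_nonneg (by positivity), show 1 / 2 + ((tj / 2 : ℝ) : ℂ) * I = (1 + tj * I) / 2 by
      push_cast; ring] at this
  have hminus : ‖GammaC ((1 - (tj : ℂ) * I) / 2)‖ ≤ 2 * Real.exp (-(π / 2) * (tj / 2)) := by
    have := norm_GammaC_one_half_add_mul_I_le (-(tj / 2))
    rwa [abs_neg, abs_of_nonneg (by positivity), show 1 / 2 + ((-(tj / 2) : ℝ) : ℂ) * I =
      (1 - tj * I) / 2 by push_cast; ring] at this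
  have hfactor (e1 e2 : ℝ) : ‖GammaC ((1 + e1 * tj * I) / 2 + e2 * tf * I)‖ ≤
      2 * Real.exp (-(π / 2) * |e1 * tj / 2 + e2 * tf|) := by
    convert norm_GammaC_one_half_add_mul_I_le (e1 * tj / 2 + e2 * tf) using 3
    push_cast; ring
  have hexp : Real.exp (-(π / 2) * (2 * tj)) = Real.exp (-(π / 2) * (tj / 2)) ^ 4 := by
    rw [← Real.exp_nat_mul]; ring_nf
  calc N₂ tj tf ≤ (2 * Real.exp (-(π / 2) * (tj / 2))) ^ 2 *
        (2 * Real.exp (-(π / 2) * (tj / 2))) ^ 2 *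
        ∏ e1 ∈ signs, ∏ e2 ∈ signs, 2 * Real.exp (-(π / 2) * |(e1 : ℝ) * tj / 2 + e2 * tf|) := by
        unfold N₂
        gcongr with e1 _ e2 _
        exact hfactor _ _
    _ = _ := by
        simp only [prod_mul_distrib, prod_const, ← Real.exp_sum, ← mul_sum, card_signs]
        rw [mul_add, Real.exp_add, hexp]
        ring

theorem N₁_mul_N₂_le {tj : ℝ} (htj : 0 ≤ tj) (tf tg t : ℝ) :
    N₁ t tg tj * N₂ tj tf ≤
      2 ^ 16 *
        (Real.exp (-π * Q1 tj tf tg |t|) * Real.exp (-π * (|t| + tg + 2 * tj + 2 * tf))) := by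
  have hN₂ : 0 ≤ N₂ tj tf := by unfold N₂; positivity
  calc N₁ t tg tj * N₂ tj tf
      ≤ 2 ^ 8 * Real.exp (-(π / 2) * ∑ e1 ∈ signs, ∑ e2 ∈ signs, ∑ e3 ∈ signs,
          |((e1 : ℝ) * t + e2 * tg + e3 * tj) / 2|) *
        (2 ^ 8 * Real.exp (-(π / 2) * (2 * tj + ∑ e1 ∈ signs, ∑ e2 ∈ signs,
          |(e1 : ℝ) * tj / 2 + e2 * tf|))) :=
        mul_le_mul (N₁_le t tg tj) (N₂_le htj tf) hN₂ (by positivity)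
    _ = _ := by
        rw [mul_mul_mul_comm, ← Real.exp_add, ← Real.exp_add, Q1_eq_sum_signs,
          show (2 : ℝ) ^ 16 = 2 ^ 8 * 2 ^ 8 by norm_num]
        congr 2
        ring

theorem mul_exp_le_D₁_mul_D₂ {tj tf tg : ℝ} (htj : 0 < tj) (htf : 0 < tf) (htg : 0 < tg)
    (t : ℝ) :
    (1 + |t|) / 2 * (2 / π) ^ 5 * tg * tj ^ 2 * tf ^ 2 *
        Real.exp (-π * (|t| + tg + 2 * tj + 2 * tf)) ≤ D₁ t tg tj * D₂ tj tf := by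
  have hexp : Real.exp (-π * (|t| + tg + 2 * tj + 2 * tf)) = Real.exp (-π * |t|) *
      Real.exp (-π * tg) * Real.exp (-π * tj) ^ 2 * Real.exp (-π * tf) ^ 2 := by
    simp only [← Real.exp_nat_mul, ← Real.exp_add]; ring_nf
  have ht := mul_exp_le_norm_Gamma_one_add_mul_I_sq t
  have hg := mul_exp_le_norm_GammaC_one_add_mul_I_sq htg
  have hj := mul_exp_le_norm_GammaC_one_add_mul_I_sq htj
  have hf := mul_exp_le_norm_GammaC_one_add_mul_I_sq htf
  calc _ = (1 + |t|) / 2 * Real.exp (-π * |t|) * (2 / π * tg * Real.exp (-π * tg)) *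
        (2 / π * tj * Real.exp (-π * tj)) *
        ((2 / π * tf * Real.exp (-π * tf)) ^ 2 * (2 / π * tj * Real.exp (-π * tj))) := by
        rw [hexp]; ring
    _ ≤ D₁ t tg tj * D₂ tj tf := by
        rw [D₁, D₂, show ∀ x : ℝ, x ^ 4 = (x ^ 2) ^ 2 from fun x => by ring]
        gcongr

end TripleProduct

open TripleProduct

/-- Archimedean bound for the triple product factors with one Eisenstein parameter `t`:
`(N₁/D₁)^{1/2} (N₂/D₂)^{1/2} ≤ C e^{-(π/2) Q₁(t_j; t_f, t_g, |t|)} / (t_j t_f (1+|t|)^{1/2} t_g^{1/2})`. -/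
theorem archimedean_bound_eisenstein_triple_product :
    ∃ C : ℝ, ∀ tj tf tg : ℝ, 1 ≤ tj → 1 ≤ tf → 1 ≤ tg → ∀ t : ℝ,
      ((∏ e1 ∈ signs, ∏ e2 ∈ signs, ∏ e3 ∈ signs,
          ‖GammaC ((1 + Complex.I * ((e1 * t + e2 * tg + e3 * tj : ℝ) : ℂ)) / 2)‖) /
        (‖Complex.Gamma (1 + (t : ℂ) * Complex.I)‖ ^ 2 *
          ‖GammaC (1 + (tg : ℂ) * Complex.I)‖ ^ 2 *
          ‖GammaC (1 + (tj : ℂ) * Complex.I)‖ ^ 2)) ^ ((1 : ℝ) / 2) *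
      ((‖GammaC ((1 + (tj : ℂ) * Complex.I) / 2)‖ ^ 2 *
          ‖GammaC ((1 - (tj : ℂ) * Complex.I) / 2)‖ ^ 2 *
          ∏ e1 ∈ signs, ∏ e2 ∈ signs,
            ‖GammaC ((1 + ((e1 : ℝ) : ℂ) * (tj : ℂ) * Complex.I) / 2 +
              ((e2 : ℝ) : ℂ) * (tf : ℂ) * Complex.I)‖) /
        (‖GammaC (1 + (tf : ℂ) * Complex.I)‖ ^ 4 *
          ‖GammaC (1 + (tj : ℂ) * Complex.I)‖ ^ 2)) ^ ((1 : ℝ) / 2) ≤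
      C * Real.exp (-(π / 2) * Q1 tj tf tg |t|) /
        (tj * tf * (1 + |t|) ^ ((1 : ℝ) / 2) * tg ^ ((1 : ℝ) / 2)) := by
  refine ⟨√(2 ^ 12 * π ^ 5), fun tj tf tg htj htf htg t => ?_⟩
  change (N₁ t tg tj / D₁ t tg tj) ^ ((1 : ℝ) / 2) * (N₂ tj tf / D₂ tj tf) ^ ((1 : ℝ) / 2) ≤ _
  set Q := Q1 tj tf tg |t|
  set E := Real.exp (-π * (|t| + tg + 2 * tj + 2 * tf))
  have hE : E ≠ 0 := (Real.exp_pos _).ne'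
  have hN : N₁ t tg tj * N₂ tj tf ≤ 2 ^ 16 * (Real.exp (-π * Q) * E) :=
    N₁_mul_N₂_le (by linarith) ..
  have hD := mul_exp_le_D₁_mul_D₂ (show 0 < tj by linarith) (show 0 < tf by linarith)
    (show 0 < tg by linarith) t
  have hrhs : (√(2 ^ 12 * π ^ 5) * Real.exp (-(π / 2) * Q) / (tj * tf * √(1 + |t|) * √tg)) ^ 2
      = 2 ^ 12 * π ^ 5 * Real.exp (-π * Q) / (tj ^ 2 * tf ^ 2 * (1 + |t|) * tg) := by
    rw [div_pow, mul_pow, mul_pow, mul_pow, mul_pow, Real.sq_sqrt (by positivity),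
      Real.sq_sqrt (by positivity), Real.sq_sqrt (by positivity), ← Real.exp_nat_mul]
    ring_nf
  have h₂ : 0 ≤ N₂ tj tf / D₂ tj tf := by unfold N₂ D₂; positivity
  simp only [← Real.sqrt_eq_rpow]
  rw [← Real.sqrt_mul' _ h₂, Real.sqrt_le_left (by positivity), div_mul_div_comm, hrhs]
  calc _ ≤ 2 ^ 16 * (Real.exp (-π * Q) * E) /
        ((1 + |t|) / 2 * (2 / π) ^ 5 * tg * tj ^ 2 * tf ^ 2 * E) :=
        div_le_div₀ (by positivity) hN (by positivity) hD
    _ = _ := by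
      field_simp
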